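/- arXiv:2310.16780 — 3 statements merged into one kernel-verified Lean document; each statement's English description precedes it below -/
import Mathlib

section
/- Let δ > 0 and let f : ℝ → ℂ be essentially bounded (with respect to Lebesgue measure). If the limit lim_{M→∞} (1/M) ∫₀^M f(t) dt exists, then the limit lim_{M→∞} (1/M) ∫₀^M f(t^δ) dt exists and the two limits are equal. -/
/-!
After the substitution `u = t ^ δ`, the average `(1/M) ∫₀^M f(t^δ) dt` becomes
`N^(-γ) ∫₀^N γ u^(γ-1) f(u) du` with `N = M ^ δ` and `γ = 1/δ`. Writing `F(u) = ∫₀^u f`, an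
integration by parts turns this weighted average into
`γ F(N)/N - (γ-1) · N^(-γ) ∫₀^N γ u^(γ-1) F(u)/u du` up to `O(N^(-γ))`. Since `F(u)/u` is
bounded and tends to `L`, its weighted average also tends to `L` by dominated convergence
(rescale `u = N v`), so the whole expression tends to `γ L - (γ-1) L = L`.
The integration by parts is done for real-valued `f`, where `F` is absolutely continuous, and the
vector-valued case follows coordinatewise.
-/

open MeasureTheory Filter Set Real Topology

theorem MeasureTheory.MemLp.intervalIntegrable {E : Type*} [NormedAddCommGroup E]
    {μ : Measure ℝ} [IsLocallyFiniteMeasure μ] {p : ENNReal} {f : ℝ → E} (hf : MemLp f p μ)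
    (hp : 1 ≤ p) (a b : ℝ) :
    IntervalIntegrable f μ a b :=
  ((hf.locallyIntegrable hp).integrableOn_isCompact isCompact_uIcc).intervalIntegrable

variable {E : Type*} [NormedAddCommGroup E] [NormedSpace ℝ E]

theorem IntervalIntegrable.smul_of_top_left {μ : Measure ℝ} {φ : ℝ → ℝ} {f : ℝ → E} {a b : ℝ}
    (hφ : IntervalIntegrable φ μ a b) (hf : MemLp f ⊤ μ) :
    IntervalIntegrable (fun u => φ u • f u) μ a b :=
  ⟨hφ.1.smul_of_top_left (hf.restrict _), hφ.2.smul_of_top_left (hf.restrict _)⟩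

theorem setIntegral_Ioc_comp_rpow (f : ℝ → E) {δ M : ℝ} (hδ : 0 < δ) (hM : 0 ≤ M) :
    ∫ t in Ioc 0 M, f (t ^ δ) = ∫ u in Ioc 0 (M ^ δ), (δ⁻¹ * u ^ (δ⁻¹ - 1)) • f u := by
  have hpt : ∀ x ∈ Ioi (0 : ℝ),
      (|δ⁻¹| * x ^ (δ⁻¹ - 1)) • (Ioc 0 M).indicator (fun t => f (t ^ δ)) (x ^ δ⁻¹)
        = (Ioc 0 (M ^ δ)).indicator (fun u => (δ⁻¹ * u ^ (δ⁻¹ - 1)) • f u) x := by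
    intro x (hx : 0 < x)
    have hmem : x ^ δ⁻¹ ∈ Ioc 0 M ↔ x ∈ Ioc 0 (M ^ δ) := by
      simp only [mem_Ioc, rpow_inv_le_iff_of_pos hx.le hM hδ, rpow_pos_of_pos hx, hx, true_and]
    by_cases hxM : x ∈ Ioc 0 (M ^ δ)
    · rw [indicator_of_mem (hmem.2 hxM), indicator_of_mem hxM, rpow_inv_rpow hx.le hδ.ne',
        abs_of_pos (inv_pos.2 hδ)]
    · rw [indicator_of_notMem (mt hmem.1 hxM), indicator_of_notMem hxM, smul_zero]
  rw [← inter_eq_right.2 (Ioc_subset_Ioi_self : Ioc 0 M ⊆ Ioi 0),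
    ← inter_eq_right.2 (Ioc_subset_Ioi_self : Ioc 0 (M ^ δ) ⊆ Ioi 0),
    ← setIntegral_indicator measurableSet_Ioc, ← setIntegral_indicator measurableSet_Ioc,
    ← integral_comp_rpow_Ioi _ (inv_pos.2 hδ).ne', setIntegral_congr_fun measurableSet_Ioi hpt]

theorem integral_rpow_mul_eq_sub {g : ℝ → ℝ} {a b γ : ℝ} (hg : IntervalIntegrable g volume 0 b)
    (ha : 0 < a) (hab : a ≤ b) :
    ∫ u in a..b, u ^ (γ - 1) * g u = b ^ (γ - 1) * (∫ t in 0..b, g t)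
      - a ^ (γ - 1) * (∫ t in 0..a, g t)
      - (γ - 1) * ∫ u in a..b, u ^ (γ - 2) * ∫ t in 0..u, g t := by
  have hsub : uIcc a b ⊆ uIcc 0 b :=
    uIcc_subset_uIcc (by rw [uIcc_of_le (ha.le.trans hab)]; exact ⟨ha.le, hab⟩) right_mem_uIcc
  have hF := (hg.absolutelyContinuousOnInterval_intervalIntegral left_mem_uIcc).mono hsub
  have hw : AbsolutelyContinuousOnInterval (fun x : ℝ => x ^ (γ - 1)) a b := by
    refine ContDiffOn.absolutelyContinuousOnInterval fun x hx => ?_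
    rw [uIcc_of_le hab] at hx
    exact (contDiffAt_rpow_const_of_ne (ha.trans_le hx.1).ne').contDiffWithinAt
  have hderiv : ∀ᵐ x, x ∈ uIoc a b →
      deriv (fun x => ∫ t in 0..x, g t) x * x ^ (γ - 1) = x ^ (γ - 1) * g x := by
    filter_upwards [hg.ae_hasDerivAt_integral] with x hx hxab
    rw [(hx (hsub (uIoc_subset_uIcc hxab)) 0 left_mem_uIcc).deriv, mul_comm]
  have ibp := hF.integral_mul_deriv_eq_deriv_mul hw
  simp only [Real.deriv_rpow_const, intervalIntegral.integral_congr_ae hderiv] at ibp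
  have hcomm : ∫ u in a..b, (∫ t in 0..u, g t) * ((γ - 1) * u ^ (γ - 1 - 1))
      = (γ - 1) * ∫ u in a..b, u ^ (γ - 2) * ∫ t in 0..u, g t := by
    rw [← intervalIntegral.integral_const_mul]
    congr 1 with u
    ring_nf
  linarith

/-- The average of `f` against the probability density `γ u^(γ-1) / N^γ` on `[0, N]`;
for `γ = 1` it is the plain average. -/
noncomputable def powerWeightedAverage (γ : ℝ) (f : ℝ → E) (N : ℝ) : E :=
  N ^ (-γ) • ∫ u in 0..N, (γ * u ^ (γ - 1)) • f u

theorem tendsto_powerWeightedAverage_of_tendsto [CompleteSpace E] {h : ℝ → E} {L : E} {C γ : ℝ}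
    (hγ : 0 < γ) (hm : StronglyMeasurable h) (hb : ∀ u > 0, ‖h u‖ ≤ C) (hh : Tendsto h atTop (𝓝 L)) :
    Tendsto (powerWeightedAverage γ h) atTop (𝓝 L) := by
  have hrescale : ∀ N > 0,
      powerWeightedAverage γ h N = ∫ v in 0..1, (γ * v ^ (γ - 1)) • h (N * v) := by
    intro N hN
    have hpt : ∀ v ∈ uIcc (0 : ℝ) 1, (γ * v ^ (γ - 1)) • h (N * v)
        = N ^ (1 - γ) • ((γ * (N * v) ^ (γ - 1)) • h (N * v)) := by
      intro v hv
      rw [uIcc_of_le zero_le_one] at hv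
      have hN1 : N ^ (1 - γ) * N ^ (γ - 1) = 1 := by rw [← rpow_add hN]; simp
      rw [smul_smul, mul_rpow hN.le hv.1]
      congr 1
      linear_combination (-(γ * v ^ (γ - 1))) * hN1
    rw [intervalIntegral.integral_congr hpt, intervalIntegral.integral_smul,
      intervalIntegral.integral_comp_mul_left (fun u => (γ * u ^ (γ - 1)) • h u) hN.ne',
      smul_smul, mul_zero, mul_one, ← rpow_neg_one, ← rpow_add hN, powerWeightedAverage]
    ring_nf
  have hlim : Tendsto (fun N : ℝ => ∫ v in 0..1, (γ * v ^ (γ - 1)) • h (N * v)) atTop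
      (𝓝 (∫ v in 0..1, (γ * v ^ (γ - 1)) • L)) := by
    refine intervalIntegral.tendsto_integral_filter_of_dominated_convergence
      (fun v => γ * v ^ (γ - 1) * C) ?_ ?_ ?_ ?_
    · exact Eventually.of_forall fun N =>
        ((measurable_id.pow_const _).const_mul γ).aestronglyMeasurable.smul
          (hm.comp_measurable (measurable_const_mul N)).aestronglyMeasurable
    · filter_upwards [eventually_gt_atTop 0] with N hN
      refine Eventually.of_forall fun v hv => ?_
      rw [uIoc_of_le zero_le_one] at hv
      have hw : 0 ≤ γ * v ^ (γ - 1) := mul_nonneg hγ.le (rpow_nonneg hv.1.le _)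
      rw [norm_smul, norm_of_nonneg hw]
      exact mul_le_mul_of_nonneg_left (hb _ (mul_pos hN hv.1)) hw
    · exact ((intervalIntegral.intervalIntegrable_rpow' (by linarith)).const_mul γ).mul_const C
    · refine Eventually.of_forall fun v hv => ?_
      rw [uIoc_of_le zero_le_one] at hv
      exact (hh.comp (tendsto_id.atTop_mul_const hv.1)).const_smul _
  have hmass : ∫ v in (0 : ℝ)..1, (γ * v ^ (γ - 1)) • L = L := by
    rw [intervalIntegral.integral_smul_const, intervalIntegral.integral_const_mul,
      integral_rpow (Or.inl (by linarith))]
    simp [zero_rpow hγ.ne', hγ.ne']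
  rw [← hmass]
  exact hlim.congr' ((eventually_gt_atTop 0).mono fun N hN => (hrescale N hN).symm)

theorem Real.norm_integral_div_le_lpNorm {g : ℝ → ℝ} (hg : MemLp g ⊤ volume) (u : ℝ) :
    ‖(∫ t in 0..u, g t) / u‖ ≤ lpNorm g ⊤ volume := by
  have := intervalIntegral.norm_integral_le_of_norm_le_const_ae
    (a := 0) (b := u) ((ae_le_lpNorm_exponent_top hg).mono fun x hx _ => hx)
  rw [sub_zero] at this
  rw [norm_div, Real.norm_eq_abs]
  exact div_le_of_le_mul₀ (abs_nonneg u) lpNorm_nonneg this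

theorem Real.stronglyMeasurable_integral_div {g : ℝ → ℝ} (hg : MemLp g ⊤ volume) :
    StronglyMeasurable fun u => (∫ t in 0..u, g t) / u :=
  ((intervalIntegral.continuous_primitive (hg.intervalIntegrable le_top) 0).measurable.div
    measurable_id).stronglyMeasurable

theorem Real.exists_powerWeightedAverage_eq {g : ℝ → ℝ} {γ : ℝ} (hg : MemLp g ⊤ volume)
    (hγ : 0 < γ) :
    ∃ c, ∀ N ≥ 1, powerWeightedAverage γ g N = N ^ (-γ) * c + γ * ((∫ t in 0..N, g t) / N)
      - (γ - 1) * powerWeightedAverage γ (fun u => (∫ t in 0..u, g t) / u) N := by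
  set F : ℝ → ℝ := fun x => ∫ t in 0..x, g t
  set h : ℝ → ℝ := fun u => F u / u
  have hhi : MemLp h ⊤ volume :=
    memLp_top_of_bound (Real.stronglyMeasurable_integral_div hg).aestronglyMeasurable _
      (Eventually.of_forall (Real.norm_integral_div_le_lpNorm hg))
  have hrpow : ∀ a b, IntervalIntegrable (fun u : ℝ => u ^ (γ - 1)) volume a b :=
    fun a b => intervalIntegral.intervalIntegrable_rpow' (by linarith)
  have hgw : ∀ a b, IntervalIntegrable (fun u => u ^ (γ - 1) * g u) volume a b :=
    fun a b => (hrpow a b).smul_of_top_left hg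
  have hhw : ∀ a b, IntervalIntegrable (fun u => u ^ (γ - 1) * h u) volume a b :=
    fun a b => (hrpow a b).smul_of_top_left hhi
  refine ⟨γ * ((∫ u in 0..1, u ^ (γ - 1) * g u) - F 1 + (γ - 1) * ∫ u in 0..1, u ^ (γ - 1) * h u),
    fun N hN => ?_⟩
  have hshift : ∫ u in 1..N, u ^ (γ - 2) * F u = ∫ u in 1..N, u ^ (γ - 1) * h u := by
    refine intervalIntegral.integral_congr fun u hu => ?_
    rw [uIcc_of_le hN] at hu
    have hu0 : 0 < u := by linarith [hu.1]
    simp only [h]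
    rw [show γ - 1 = γ - 2 + 1 by ring, rpow_add hu0, rpow_one]
    field_simp
  have hpow : N ^ (-γ) * N ^ (γ - 1) = N⁻¹ := by
    rw [← rpow_add (by linarith), ← rpow_neg_one]
    ring_nf
  have ibp := integral_rpow_mul_eq_sub (γ := γ) (hg.intervalIntegrable le_top 0 N) one_pos hN
  rw [one_rpow, one_mul, hshift,
    ← intervalIntegral.integral_interval_sub_left (hhw 0 N) (hhw 0 1)] at ibp
  simp only [powerWeightedAverage, smul_eq_mul, mul_assoc, intervalIntegral.integral_const_mul]
  rw [← intervalIntegral.integral_add_adjacent_intervals (hgw 0 1) (hgw 1 N), ibp, div_eq_inv_mul,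
    ← hpow]
  ring

theorem Real.tendsto_powerWeightedAverage_of_tendsto_average {g : ℝ → ℝ} {γ L : ℝ}
    (hg : MemLp g ⊤ volume) (hγ : 0 < γ)
    (hL : Tendsto (fun N : ℝ => N⁻¹ • ∫ u in 0..N, g u) atTop (𝓝 L)) :
    Tendsto (powerWeightedAverage γ g) atTop (𝓝 L) := by
  have hh : Tendsto (fun u => (∫ t in 0..u, g t) / u) atTop (𝓝 L) :=
    hL.congr fun N => by rw [smul_eq_mul, inv_mul_eq_div]
  have hh' := tendsto_powerWeightedAverage_of_tendsto hγ (Real.stronglyMeasurable_integral_div hg)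
    (fun u _ => Real.norm_integral_div_le_lpNorm hg u) hh
  obtain ⟨c, hc⟩ := Real.exists_powerWeightedAverage_eq hg hγ
  have hlim := (((tendsto_rpow_neg_atTop hγ).mul_const c).add (hh.const_mul γ)).sub
    (hh'.const_mul (γ - 1))
  rw [zero_mul, zero_add, ← sub_mul, sub_sub_cancel, one_mul] at hlim
  exact hlim.congr' ((eventually_ge_atTop 1).mono fun N hN => (hc N hN).symm)

theorem tendsto_powerWeightedAverage_of_tendsto_average [FiniteDimensional ℝ E] {f : ℝ → E}
    {γ : ℝ} {L : E} (hf : MemLp f ⊤ volume) (hγ : 0 < γ)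
    (hL : Tendsto (fun N : ℝ => N⁻¹ • ∫ u in 0..N, f u) atTop (𝓝 L)) :
    Tendsto (powerWeightedAverage γ f) atTop (𝓝 L) := by
  have hcoord (ℓ : E →L[ℝ] ℝ) :
      Tendsto (fun N => ℓ (powerWeightedAverage γ f N)) atTop (𝓝 (ℓ L)) := by
    have hℓL : Tendsto (fun N : ℝ => N⁻¹ • ∫ u in 0..N, ℓ (f u)) atTop (𝓝 (ℓ L)) :=
      ((ℓ.continuous.tendsto L).comp hL).congr fun N => by
        simp [ℓ.intervalIntegral_comp_comm (hf.intervalIntegrable le_top 0 N)]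
    refine (Real.tendsto_powerWeightedAverage_of_tendsto_average (ℓ.comp_memLp' hf) hγ
      hℓL).congr fun N => ?_
    have hw : IntervalIntegrable (fun u => (γ * u ^ (γ - 1)) • f u) volume 0 N :=
      ((intervalIntegral.intervalIntegrable_rpow' (by linarith)).const_mul γ).smul_of_top_left hf
    simp [powerWeightedAverage, ← ℓ.intervalIntegral_comp_comm hw]
  let b := Module.finBasis ℝ E
  have hrepr : Tendsto (fun N => b.equivFunL (powerWeightedAverage γ f N)) atTop
      (𝓝 (b.equivFunL L)) :=
    tendsto_pi_nhds.2 fun i =>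
      hcoord ((ContinuousLinearMap.proj i).comp b.equivFunL.toContinuousLinearMap)
  simpa [Function.comp_def] using (b.equivFunL.symm.continuous.tendsto _).comp hrepr

/-- If the averages `(1/M) ∫₀^M f(t) dt` of an essentially bounded
function `f : ℝ → ℂ` converge as `M → ∞`, then so do the averages
`(1/M) ∫₀^M f(t^δ) dt`, with the same limit. -/
theorem stmt0 (δ : ℝ) (hδ : 0 < δ) (f : ℝ → ℂ)
    (hf : MemLp f ⊤ (volume : Measure ℝ)) (L : ℂ)
    (hL : Tendsto (fun M : ℝ => (1 / M) • ∫ t in Set.Ioc (0 : ℝ) M, f t)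
      atTop (nhds L)) :
    Tendsto (fun M : ℝ => (1 / M) • ∫ t in Set.Ioc (0 : ℝ) M, f (t ^ δ))
      atTop (nhds L) := by
  have hL' : Tendsto (fun N : ℝ => N⁻¹ • ∫ u in 0..N, f u) atTop (𝓝 L) :=
    hL.congr' ((eventually_ge_atTop 0).mono fun N hN => by
      simp only [one_div, intervalIntegral.integral_of_le hN])
  have hW := (tendsto_powerWeightedAverage_of_tendsto_average hf (inv_pos.2 hδ) hL').comp
    (tendsto_rpow_atTop hδ)
  refine hW.congr' ((eventually_gt_atTop 0).mono fun M hM => ?_)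
  dsimp only [Function.comp_apply, powerWeightedAverage]
  rw [setIntegral_Ioc_comp_rpow f hδ hM.le,
    ← intervalIntegral.integral_of_le (rpow_nonneg hM.le _), rpow_neg (rpow_nonneg hM.le _),
    rpow_rpow_inv hM.le hδ.ne', one_div]
end

section
/- Let (X, 𝒳, μ, T) be a measure-preserving system on a Lebesgue probability space, F ∈ L^∞(μ), and (a_n)_{n≥1} a sequence of natural numbers with a_n → ∞. Suppose the discrete polynomial ergodic averages along a polynomial P ∈ ℤ[n] satisfy the pointwise ergodic theorem: for every bounded measurable h, lim_N E_{n < N} h(T^{P(n)} x) exists μ-a.e. and equals the L¹-limit in integral. Then for μ-a.e. x ∈ X, lim_{N→∞} E_{n < N} | (E_{i < a_n} F(T^i (T^{P(n)} x))) − 𝔼_μ(F | ℐ(T))(T^{P(n)} x) | = 0, where ℐ(T) is the σ-algebra of T-invariant sets. -/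
/-!
Birkhoff's theorem, proved here from Garsia's maximal inequality, gives
`A_m F → c := 𝔼(F | ℐ)` a.e., where `A_m` is the `m`-th Birkhoff average along `T 1`. By Egorov
the convergence is uniform, from some `r_k` on, off a set `E_k` with `μ E_k ≤ 2⁻ᵏ`. Once
`a n ≥ r_k`, the summand `|A_{a n} F - c| (T^{P(n)} x)` is below `δ` unless `T^{P(n)} x ∈ E_k`, and
it is at most `2‖F‖_∞` always. The hypothesis on `P` makes the frequency of those visits converge
to some `L_k x` with `∫ L_k = μ E_k`, so the Cesàro means of the summands are eventually below
`δ + 2‖F‖_∞ L_k x`; and `∑ ∫ L_k < ∞` forces `L_k x → 0` a.e.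
-/

open MeasureTheory Filter Finset Topology
open scoped ENNReal NNReal

abbrev invSigma {α : Type*} [MeasurableSpace α] (μ : Measure α) (f : α → α) : MeasurableSpace α :=
  MeasurableSpace.generateFrom {A | MeasurableSet A ∧ f ⁻¹' A =ᵐ[μ] A}

section InvariantSigma

variable {α : Type*} [MeasurableSpace α] {μ : Measure α} {f : α → α}

theorem invSigma_le : invSigma μ f ≤ ‹MeasurableSpace α› :=
  MeasurableSpace.generateFrom_le fun _ hA => hA.1

theorem preimage_ae_eq_of_measurableSet_invSigma {A : Set α}
    (hA : MeasurableSet[invSigma μ f] A) : f ⁻¹' A =ᵐ[μ] A := by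
  induction A, hA using MeasurableSpace.generateFrom_induction with
  | hC A hA => exact hA.2
  | empty => rfl
  | compl A _ hA => exact hA.compl
  | iUnion s _ hs => simpa only [Set.preimage_iUnion] using Filter.EventuallyEq.countable_iUnion hs

theorem comp_ae_eq_of_measurable_invSigma {c : α → ℝ} (hc : Measurable[invSigma μ f] c) :
    c ∘ f =ᵐ[μ] c := by
  have hlevel : ∀ᵐ x ∂μ, ∀ q : ℚ, ((q : ℝ) < c (f x) ↔ (q : ℝ) < c x) := by
    refine ae_all_iff.2 fun q => ?_
    filter_upwards [preimage_ae_eq_of_measurableSet_invSigma (hc measurableSet_Ioi)] with x hx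
    exact Iff.of_eq hx
  filter_upwards [hlevel] with x hx
  by_contra hne
  rcases lt_or_gt_of_ne hne with h | h
  · obtain ⟨q, hq₁, hq₂⟩ := exists_rat_btwn h
    exact hq₁.not_gt ((hx q).2 hq₂)
  · obtain ⟨q, hq₁, hq₂⟩ := exists_rat_btwn h
    exact hq₁.not_gt ((hx q).1 hq₂)

theorem ae_forall_iterate_eq_of_measurable_invSigma (hf : Measure.QuasiMeasurePreserving f μ μ)
    {c : α → ℝ} (hc : Measurable[invSigma μ f] c) : ∀ᵐ x ∂μ, ∀ n, c (f^[n] x) = c x := by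
  refine ae_all_iff.2 fun n => ?_
  induction n with
  | zero => exact ae_of_all _ fun _ => rfl
  | succ n ih =>
    filter_upwards [hf.ae ih, comp_ae_eq_of_measurable_invSigma hc] with x h₁ h₂
    rw [Function.iterate_succ_apply, h₁, ← h₂]
    rfl

end InvariantSigma

section MaximalErgodic

def birkhoffMax {α : Type*} (f : α → α) (g : α → ℝ) (N : ℕ) : α → ℝ :=
  (range (N + 1)).sup' nonempty_range_add_one (birkhoffSum f g)

variable {α : Type*} {f : α → α} {g : α → ℝ}

theorem birkhoffSum_le_birkhoffMax {n N : ℕ} (h : n ≤ N) (x : α) :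
    birkhoffSum f g n x ≤ birkhoffMax f g N x := by
  rw [birkhoffMax, Finset.sup'_apply]
  exact le_sup'_of_le _ (mem_range_succ_iff.2 h) le_rfl

theorem birkhoffMax_nonneg (N : ℕ) (x : α) : 0 ≤ birkhoffMax f g N x := by
  simpa using birkhoffSum_le_birkhoffMax (f := f) (g := g) N.zero_le x

theorem birkhoffMax_mono (x : α) : Monotone (birkhoffMax f g · x) := fun _ _ h => by
  simp only [birkhoffMax, Finset.sup'_apply]
  exact sup'_mono _ (range_subset_range.2 (by omega)) _

theorem birkhoffMax_le_add_comp {N : ℕ} {x : α} (hx : 0 < birkhoffMax f g N x) :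
    birkhoffMax f g N x ≤ g x + birkhoffMax f g N (f x) := by
  obtain ⟨n, hn, hmax⟩ := exists_mem_eq_sup' nonempty_range_add_one (birkhoffSum f g · x)
  have hMx : birkhoffMax f g N x = birkhoffSum f g n x := by
    rw [birkhoffMax, Finset.sup'_apply, hmax]
  rw [hMx] at hx ⊢
  obtain _ | m := n
  · simp at hx
  · rw [birkhoffSum_succ']
    gcongr
    exact birkhoffSum_le_birkhoffMax (by simp at hn; omega) _

variable [MeasurableSpace α] {μ : Measure α}

theorem measurable_birkhoffSum (hf : Measurable f) (hg : Measurable g) (n : ℕ) :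
    Measurable (birkhoffSum f g n) :=
  Finset.measurable_sum _ fun k _ => hg.comp (hf.iterate k)

theorem measurable_birkhoffMax (hf : Measurable f) (hg : Measurable g) (N : ℕ) :
    Measurable (birkhoffMax f g N) :=
  Finset.measurable_sup' _ fun n _ => measurable_birkhoffSum hf hg n

theorem integrable_birkhoffMax (hf : MeasurePreserving f μ μ) (hg : Integrable g μ) (N : ℕ) :
    Integrable (birkhoffMax f g N) μ :=
  Finset.sup'_induction (p := (Integrable · μ)) _ _ (fun _ h₁ _ h₂ => h₁.sup h₂) fun _ _ =>
    integrable_finsetSum _ fun k _ => (hf.iterate k).integrable_comp_of_integrable hg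

theorem setIntegral_birkhoffMax_pos_nonneg (hf : MeasurePreserving f μ μ) (hgm : Measurable g)
    (hg : Integrable g μ) (N : ℕ) : 0 ≤ ∫ x in {x | 0 < birkhoffMax f g N x}, g x ∂μ := by
  set M := birkhoffMax f g N
  set G := {x | 0 < M x}
  have hMm : Measurable M := measurable_birkhoffMax hf.measurable hgm N
  have hM : Integrable M μ := integrable_birkhoffMax hf hg N
  have hMf : Integrable (M ∘ f) μ := hf.integrable_comp_of_integrable hM
  have hG : MeasurableSet G := measurableSet_lt measurable_const hMm
  have hcomp : ∫ x, M (f x) ∂μ = ∫ x, M x ∂μ := by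
    rw [← integral_map hf.aemeasurable (by rw [hf.map_eq]; exact hMm.aestronglyMeasurable),
      hf.map_eq]
  calc (0 : ℝ) = ∫ x, M x ∂μ - ∫ x, M (f x) ∂μ := by rw [hcomp, sub_self]
    _ ≤ ∫ x in G, M x ∂μ - ∫ x in G, M (f x) ∂μ := by
      gcongr ?_ - ?_
      · have hGc : ∫ x in Gᶜ, M x ∂μ = 0 := setIntegral_eq_zero_of_forall_eq_zero
          fun x hx => le_antisymm (not_lt.1 hx) (birkhoffMax_nonneg N x)
        rw [← integral_add_compl hG hM, hGc, add_zero]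
      · exact setIntegral_le_integral hMf (ae_of_all _ fun x => birkhoffMax_nonneg N (f x))
    _ = ∫ x in G, (M x - M (f x)) ∂μ := (integral_sub hM.integrableOn hMf.integrableOn).symm
    _ ≤ ∫ x in G, g x ∂μ := setIntegral_mono_on (hM.sub hMf).integrableOn hg.integrableOn hG
      fun x hx => by linarith [birkhoffMax_le_add_comp (f := f) hx]

end MaximalErgodic

section PointwiseErgodic

theorem frequently_lt_mul_of_le_shift {u v : ℕ → ℝ} {q q' C : ℝ} (hq : q' < q) {d e : ℕ}
    (huv : ∀ n, v (n + d) ≤ u (n + e) + C) (hv : ∃ᶠ n in atTop, q * n < v n) :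
    ∃ᶠ n in atTop, q' * n < u n := by
  have hvd : ∃ᶠ n : ℕ in atTop, q * (n + d : ℕ) < v (n + d) :=
    (frequently_map (m := (· + d))).1 (by rwa [map_add_atTop_eq_nat])
  have hlin : ∀ᶠ n : ℕ in atTop, q' * (n + e : ℕ) + C ≤ q * (n + d : ℕ) := by
    obtain ⟨n₀, hn₀⟩ := exists_nat_ge ((q' * e + C - q * d) / (q - q'))
    filter_upwards [eventually_ge_atTop n₀] with n hn
    have hn' : q' * e + C - q * d ≤ (q - q') * n := by
      rw [div_le_iff₀' (sub_pos.2 hq)] at hn₀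
      exact hn₀.trans (by gcongr)
    push_cast
    linarith
  have hue : ∃ᶠ n : ℕ in atTop, q' * (n + e : ℕ) < u (n + e) :=
    (hvd.and_eventually hlin).mono fun n ⟨h₁, h₂⟩ => by linarith [huv n]
  rwa [← map_add_atTop_eq_nat e, frequently_map]

/-- `{x | limsup S_n g x / n > ε}`, with a rational slope `q > ε` so that the set is measurable
and exactly `f`-invariant. -/
def birkhoffExceedSet {α : Type*} (f : α → α) (g : α → ℝ) (ε : ℝ) : Set α :=
  {x | ∃ q : ℚ, ε < q ∧ ∃ᶠ n in atTop, (q : ℝ) * n < birkhoffSum f g n x}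

variable {α : Type*} {f : α → α} {g : α → ℝ} {ε : ℝ}

theorem preimage_birkhoffExceedSet : f ⁻¹' birkhoffExceedSet f g ε = birkhoffExceedSet f g ε := by
  ext x
  simp only [Set.mem_preimage, birkhoffExceedSet, Set.mem_ofPred_eq]
  constructor <;> rintro ⟨q, hεq, hq⟩ <;> obtain ⟨q', hεq', hq'q⟩ := exists_rat_btwn hεq <;>
    refine ⟨q', hεq', ?_⟩
  · refine frequently_lt_mul_of_le_shift (by exact_mod_cast hq'q) (d := 0) (e := 1) (C := -g x)
      (fun n => ?_) hq
    rw [birkhoffSum_succ', add_zero]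
    linarith
  · refine frequently_lt_mul_of_le_shift (by exact_mod_cast hq'q) (d := 1) (e := 0) (C := g x)
      (fun n => ?_) hq
    rw [birkhoffSum_succ', add_zero, add_comm]

theorem birkhoffAverage_eq_of_forall_iterate_eq {c : α → ℝ} {x : α} (hc : ∀ i, c (f^[i] x) = c x)
    {n : ℕ} (hn : n ≠ 0) : birkhoffAverage ℝ f c n x = c x := by
  rw [birkhoffAverage, birkhoffSum, Finset.sum_congr rfl fun i _ => hc i, Finset.sum_const,
    Finset.card_range, nsmul_eq_mul, smul_eq_mul, ← mul_assoc,
    inv_mul_cancel₀ (Nat.cast_ne_zero.2 hn), one_mul]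

theorem abs_birkhoffAverage_le {c : α → ℝ} {x : α} {B : ℝ} (h : ∀ i, |c (f^[i] x)| ≤ B)
    (n : ℕ) : |birkhoffAverage ℝ f c n x| ≤ B := by
  rcases n.eq_zero_or_pos with rfl | hn
  · simpa using (abs_nonneg _).trans (h 0)
  rw [birkhoffAverage, birkhoffSum, smul_eq_mul, abs_mul, abs_inv, Nat.abs_cast,
    inv_mul_le_iff₀ (by positivity)]
  calc |∑ i ∈ range n, c (f^[i] x)| ≤ ∑ i ∈ range n, |c (f^[i] x)| := abs_sum_le_sum_abs _ _
    _ ≤ n * B := by simpa using Finset.sum_le_sum fun i (_ : i ∈ range n) => h i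

variable [MeasurableSpace α] {μ : Measure α}

theorem measurableSet_birkhoffExceedSet (hf : Measurable f) (hg : Measurable g) (ε : ℝ) :
    MeasurableSet (birkhoffExceedSet f g ε) := by
  simp_rw [birkhoffExceedSet, frequently_atTop]
  refine measurableSet_setOfPred.2 (Measurable.exists fun q => measurable_const.and
    (Measurable.forall fun k => Measurable.exists fun n => measurable_const.and ?_))
  exact measurableSet_setOfPred.1
    (measurableSet_lt measurable_const (measurable_birkhoffSum hf hg n))

variable [IsFiniteMeasure μ]

theorem measure_birkhoffExceedSet (hf : MeasurePreserving f μ μ) (hgm : Measurable g)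
    (hg : Integrable g μ) (hg0 : ∀ A, MeasurableSet A → f ⁻¹' A = A → ∫ x in A, g x ∂μ = 0)
    (hε : 0 < ε) : μ (birkhoffExceedSet f g ε) = 0 := by
  -- The maximal sets of `ψ = 1_A (g - ε)` exhaust `A`, so Garsia gives `0 ≤ ∫_A (g - ε) = -ε μ A`.
  set A := birkhoffExceedSet f g ε
  have hA : MeasurableSet A := measurableSet_birkhoffExceedSet hf.measurable hgm ε
  have hAinv : f ⁻¹' A = A := preimage_birkhoffExceedSet
  set ψ := A.indicator (fun x => g x - ε)
  have hψm : Measurable ψ := (hgm.sub measurable_const).indicator hA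
  have hψ : Integrable ψ μ := (hg.sub (integrable_const ε)).indicator hA
  have hsub : A ⊆ ⋃ N, {x | 0 < birkhoffMax f ψ N x} := by
    intro x hx
    have hmaps : Set.MapsTo f A A := fun y hy => (hAinv.symm ▸ hy : y ∈ f ⁻¹' A)
    have hiter : ∀ i, f^[i] x ∈ A := fun i => hmaps.iterate i hx
    obtain ⟨q, hεq, hq⟩ := hx
    obtain ⟨n, hn, hqn⟩ := (frequently_atTop.1 hq) 1
    have hψn : birkhoffSum f ψ n x = birkhoffSum f g n x - n * ε := by
      simp only [birkhoffSum, ψ, Set.indicator_of_mem (hiter _), Finset.sum_sub_distrib,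
        Finset.sum_const, Finset.card_range, nsmul_eq_mul]
    refine Set.mem_iUnion.2 ⟨n, lt_of_lt_of_le ?_ (birkhoffSum_le_birkhoffMax le_rfl x)⟩
    have : (1 : ℝ) ≤ n := by exact_mod_cast hn
    rw [hψn]
    nlinarith
  have hmono : Monotone fun N => {x | 0 < birkhoffMax f ψ N x} :=
    fun N N' h x hx => hx.trans_le (birkhoffMax_mono x h)
  have hpos : 0 ≤ ∫ x in ⋃ N, {x | 0 < birkhoffMax f ψ N x}, ψ x ∂μ :=
    ge_of_tendsto' (tendsto_setIntegral_of_monotone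
      (fun N => measurableSet_lt measurable_const (measurable_birkhoffMax hf.measurable hψm N))
      hmono hψ.integrableOn) fun N => setIntegral_birkhoffMax_pos_nonneg hf hψm hψ N
  rw [setIntegral_indicator hA, Set.inter_eq_right.2 hsub,
    integral_sub hg.integrableOn (integrable_const ε).integrableOn, hg0 A hA hAinv,
    setIntegral_const, smul_eq_mul] at hpos
  have hA0 : μ.real A = 0 :=
    le_antisymm (by nlinarith [measureReal_nonneg (μ := μ) (s := A)]) measureReal_nonneg
  exact (measureReal_eq_zero_iff (measure_ne_top μ A)).1 hA0

theorem ae_eventually_birkhoffSum_le (hf : MeasurePreserving f μ μ) (hgm : Measurable g)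
    (hg : Integrable g μ) (hg0 : ∀ A, MeasurableSet A → f ⁻¹' A = A → ∫ x in A, g x ∂μ = 0) :
    ∀ᵐ x ∂μ, ∀ q : ℚ, 0 < q → ∀ᶠ n in atTop, birkhoffSum f g n x ≤ q * n := by
  refine ae_all_iff.2 fun q => ?_
  rcases le_or_gt q 0 with hq | hq
  · exact ae_of_all _ fun _ h => absurd h hq.not_gt
  have hq' : (0 : ℝ) < q := by exact_mod_cast hq
  filter_upwards [measure_eq_zero_iff_ae_notMem.1
    (measure_birkhoffExceedSet hf hgm hg hg0 (half_pos hq'))] with x hx _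
  simp only [birkhoffExceedSet, Set.mem_ofPred_eq, not_exists, not_and, not_frequently,
    not_lt] at hx
  exact hx q (half_lt_self hq')

theorem ae_tendsto_birkhoffAverage_zero (hf : MeasurePreserving f μ μ) (hgm : Measurable g)
    (hg : Integrable g μ) (hg0 : ∀ A, MeasurableSet A → f ⁻¹' A = A → ∫ x in A, g x ∂μ = 0) :
    ∀ᵐ x ∂μ, Tendsto (birkhoffAverage ℝ f g · x) atTop (𝓝 0) := by
  have hneg0 : ∀ A, MeasurableSet A → f ⁻¹' A = A → ∫ x in A, (-g) x ∂μ = 0 :=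
    fun A hA hAinv => by rw [Pi.neg_def, integral_neg, hg0 A hA hAinv, neg_zero]
  filter_upwards [ae_eventually_birkhoffSum_le hf hgm hg hg0,
    ae_eventually_birkhoffSum_le (g := -g) hf hgm.neg hg.neg hneg0] with x hup hlow
  refine Metric.tendsto_nhds.2 fun δ hδ => ?_
  obtain ⟨q, hq0, hqδ⟩ := exists_rat_btwn hδ
  have hq : (0 : ℚ) < q := by exact_mod_cast hq0
  filter_upwards [hup q hq, hlow q hq, eventually_ge_atTop 1] with n h₁ h₂ hn
  rw [birkhoffSum_neg] at h₂
  have hn' : (0 : ℝ) < n := by exact_mod_cast hn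
  rw [Real.dist_eq, sub_zero, birkhoffAverage, smul_eq_mul, abs_mul, abs_inv, Nat.abs_cast,
    inv_mul_lt_iff₀ hn']
  calc |birkhoffSum f g n x| ≤ q * n := abs_le.2 ⟨by linarith, h₁⟩
    _ < n * δ := by rw [mul_comm]; gcongr

theorem ae_tendsto_birkhoffAverage_condExp (hf : MeasurePreserving f μ μ) {F : α → ℝ}
    (hFm : Measurable F) (hF : Integrable F μ) :
    ∀ᵐ x ∂μ, Tendsto (birkhoffAverage ℝ f F · x) atTop (𝓝 (μ[F | invSigma μ f] x)) := by
  set c := μ[F | invSigma μ f]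
  have hcI : StronglyMeasurable[invSigma μ f] c := stronglyMeasurable_condExp
  have hcm : Measurable c := (hcI.mono invSigma_le).measurable
  have hc : Integrable c μ := integrable_condExp
  have h0 : ∀ A, MeasurableSet A → f ⁻¹' A = A → ∫ x in A, (F - c) x ∂μ = 0 := by
    intro A hA hAinv
    have hAI : MeasurableSet[invSigma μ f] A :=
      MeasurableSpace.measurableSet_generateFrom ⟨hA, .of_eq hAinv⟩
    rw [Pi.sub_def, integral_sub hF.integrableOn hc.integrableOn,
      setIntegral_condExp invSigma_le hF hAI, sub_self]
  filter_upwards [ae_tendsto_birkhoffAverage_zero hf (hFm.sub hcm) (hF.sub hc) h0,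
    ae_forall_iterate_eq_of_measurable_invSigma hf.quasiMeasurePreserving hcI.measurable]
    with x hx hcx
  refine (zero_add (c x) ▸ hx.add_const (c x)).congr' ?_
  filter_upwards [eventually_ne_atTop 0] with n hn
  simp only [birkhoffAverage_sub, Pi.sub_apply]
  rw [birkhoffAverage_eq_of_forall_iterate_eq hcx hn, sub_add_cancel]

end PointwiseErgodic

section Transfer

theorem tendsto_cesaro_zero_of_forall_eventually_le {u : ℕ → ℝ} (hu : ∀ n, 0 ≤ u n)
    (h : ∀ δ > 0, ∃ v : ℕ → ℝ, ∃ ℓ < δ, (∀ᶠ n in atTop, u n ≤ v n) ∧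
      Tendsto (fun N : ℕ => (N : ℝ)⁻¹ * ∑ n ∈ range N, v n) atTop (𝓝 ℓ)) :
    Tendsto (fun N : ℕ => (N : ℝ)⁻¹ * ∑ n ∈ range N, u n) atTop (𝓝 0) := by
  refine tendsto_order.2 ⟨fun b hb => .of_forall fun N => hb.trans_le (by
    have := Finset.sum_nonneg fun n (_ : n ∈ range N) => hu n; positivity), fun δ hδ => ?_⟩
  obtain ⟨v, ℓ, hℓ, huv, hv⟩ := h δ hδ
  have hexcess : Tendsto (fun N : ℕ => (N : ℝ)⁻¹ * ∑ n ∈ range N, max (u n - v n) 0) atTop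
      (𝓝 0) := by
    refine Tendsto.cesaro (tendsto_const_nhds.congr' ?_)
    filter_upwards [huv] with n hn
    simp [hn]
  filter_upwards [(hv.add hexcess).eventually_lt_const (by simpa using hℓ)] with N hN
  refine lt_of_le_of_lt ?_ hN
  rw [← mul_add, ← Finset.sum_add_distrib]
  gcongr with n
  linarith [le_max_left (u n - v n) 0]

variable {α : Type*} [MeasurableSpace α] {μ : Measure α}

def PointwiseErgodicAlong (μ : Measure α) (y : ℕ → α → α) : Prop :=
  ∀ A, MeasurableSet A → ∃ L : α → ℝ, Integrable L μ ∧
    (∀ᵐ x ∂μ, Tendsto (fun N : ℕ => (N : ℝ)⁻¹ * ∑ n ∈ range N, A.indicator 1 (y n x)) atTop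
      (𝓝 (L x))) ∧ ∫ x, L x ∂μ = μ.real A

theorem ae_tendsto_zero_of_summable_integral {L : ℕ → α → ℝ} (hL0 : ∀ k, 0 ≤ᵐ[μ] L k)
    (hL : ∀ k, Integrable (L k) μ) (hsum : Summable fun k => ∫ x, L k x ∂μ) :
    ∀ᵐ x ∂μ, Tendsto (L · x) atTop (𝓝 0) := by
  have hLm : ∀ k, AEMeasurable (fun x => ENNReal.ofReal (L k x)) μ :=
    fun k => (hL k).aemeasurable.ennreal_ofReal
  have hfin : ∫⁻ x, ∑' k, ENNReal.ofReal (L k x) ∂μ ≠ ∞ := by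
    rw [lintegral_tsum hLm]
    simp_rw [← ofReal_integral_eq_lintegral_ofReal (hL _) (hL0 _)]
    rw [← ENNReal.ofReal_tsum_of_nonneg (fun k => integral_nonneg_of_ae (hL0 k)) hsum]
    exact ENNReal.ofReal_ne_top
  filter_upwards [ae_lt_top' (AEMeasurable.tsum hLm) hfin, ae_all_iff.2 hL0] with x hx hx0
  have h := (ENNReal.tendsto_toReal ENNReal.zero_ne_top).comp
    (ENNReal.tendsto_atTop_zero_of_tsum_ne_top hx.ne)
  simpa [Function.comp_def, ENNReal.toReal_ofReal (hx0 _)] using h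

theorem ae_tendsto_cesaro_abs_comp [IsFiniteMeasure μ] {y : ℕ → α → α}
    (hy : ∀ n, Measure.QuasiMeasurePreserving (y n) μ μ)
    (hgood : PointwiseErgodicAlong μ y)
    {g : ℕ → α → ℝ} (hgm : ∀ m, Measurable (g m)) {C : ℝ} (hgC : ∀ᵐ x ∂μ, ∀ m, |g m x| ≤ C)
    (hg : ∀ᵐ x ∂μ, Tendsto (g · x) atTop (𝓝 0)) {a : ℕ → ℕ} (ha : Tendsto a atTop atTop) :
    ∀ᵐ x ∂μ, Tendsto (fun N : ℕ => (N : ℝ)⁻¹ * ∑ n ∈ range N, |g (a n) (y n x)|) atTop (𝓝 0) := by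
  choose A hAm hAμ hAunif using fun k : ℕ => tendstoUniformlyOn_of_ae_tendsto'
    (fun m => (hgm m).stronglyMeasurable) stronglyMeasurable_const hg (pow_pos one_half_pos k)
  choose L hLi hL hLA using fun k => hgood (A k) (hAm k)
  have hL0 : ∀ k, 0 ≤ᵐ[μ] L k := fun k => by
    filter_upwards [hL k] with x hx
    refine ge_of_tendsto' hx fun N => mul_nonneg (by positivity) (Finset.sum_nonneg fun n _ => ?_)
    exact Set.indicator_nonneg (fun _ _ => zero_le_one) _
  have hLsum : Summable fun k => ∫ x, L k x ∂μ := by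
    refine summable_geometric_two.of_nonneg_of_le (fun k => integral_nonneg_of_ae (hL0 k))
      fun k => ?_
    rw [hLA k]
    exact ENNReal.toReal_le_of_le_ofReal (by positivity) (hAμ k)
  filter_upwards [ae_all_iff.2 fun n => (hy n).ae hgC, ae_all_iff.2 hL,
    ae_tendsto_zero_of_summable_integral hL0 hLi hLsum] with x hxC hxL hx0
  have hC : 0 ≤ C := (abs_nonneg _).trans (hxC 0 0)
  refine tendsto_cesaro_zero_of_forall_eventually_le (fun n => abs_nonneg _) fun δ hδ => ?_
  obtain ⟨k, hk⟩ := ((hx0.const_mul C).eventually_lt_const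
    (by simpa using half_pos hδ : C * 0 < δ / 2)).exists
  refine ⟨fun n => δ / 2 + C * (A k).indicator 1 (y n x), δ / 2 + C * L k x, by linarith, ?_, ?_⟩
  · have hunif := Metric.tendstoUniformlyOn_iff.1 (hAunif k) (δ / 2) (half_pos hδ)
    filter_upwards [ha.eventually hunif] with n hn
    by_cases hyn : y n x ∈ A k
    · simp only [Set.indicator_of_mem hyn, Pi.one_apply, mul_one]
      linarith [hxC n (a n)]
    · have := hn (y n x) hyn
      simp only [Set.indicator_of_notMem hyn, mul_zero, add_zero]
      simpa [Real.dist_eq, abs_sub_comm] using this.le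
  · refine (tendsto_const_nhds.cesaro.add ((hxL k).const_mul C)).congr fun N => ?_
    simp only [Finset.sum_add_distrib, ← Finset.mul_sum]
    ring

theorem ae_tendsto_cesaro_abs_birkhoffAverage_sub_condExp [IsFiniteMeasure μ] {f : α → α}
    (hf : MeasurePreserving f μ μ) {F : α → ℝ} (hFm : Measurable F) {B : ℝ}
    (hFB : ∀ᵐ x ∂μ, |F x| ≤ B) {y : ℕ → α → α}
    (hy : ∀ n, Measure.QuasiMeasurePreserving (y n) μ μ)
    (hgood : PointwiseErgodicAlong μ y)
    {a : ℕ → ℕ} (ha : Tendsto a atTop atTop) :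
    ∀ᵐ x ∂μ, Tendsto (fun N : ℕ => (N : ℝ)⁻¹ * ∑ n ∈ range N,
      |birkhoffAverage ℝ f F (a n) (y n x) - μ[F | invSigma μ f] (y n x)|) atTop (𝓝 0) := by
  have hF : Integrable F μ := .of_bound hFm.aestronglyMeasurable B hFB
  have hcm : Measurable μ[F | invSigma μ f] :=
    (stronglyMeasurable_condExp.mono invSigma_le).measurable
  refine ae_tendsto_cesaro_abs_comp hy hgood (C := 2 * B)
    (g := fun m z => birkhoffAverage ℝ f F m z - μ[F | invSigma μ f] z)
    (fun m => ((measurable_birkhoffSum hf.measurable hFm m).const_smul (m : ℝ)⁻¹).sub hcm) ?_ ?_ ha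
  · filter_upwards [ae_all_iff.2 fun i => (hf.iterate i).quasiMeasurePreserving.ae hFB,
      ae_bdd_abs_condExp_of_ae_bdd_abs (m := invSigma μ f) hFB] with z hz hcz m
    exact (abs_sub _ _).trans (by linarith [abs_birkhoffAverage_le hz m])
  · filter_upwards [ae_tendsto_birkhoffAverage_condExp hf hFm hF] with z hz
    exact sub_self (μ[F | invSigma μ f] z) ▸ hz.sub_const _

end Transfer

theorem exists_ae_abs_le_of_memLp_top {α : Type*} [MeasurableSpace α] {μ : Measure α} {F : α → ℝ}
    (hF : MemLp F ⊤ μ) : ∃ B : ℝ≥0, ∀ᵐ x ∂μ, |F x| ≤ B := by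
  obtain ⟨B, hB⟩ := eLpNormEssSup_lt_top_iff_isBoundedUnder.1 (by simpa using hF.2)
  refine ⟨B, Eventually.mono (f := ae μ) hB fun x (hx : ‖F x‖₊ ≤ B) => ?_⟩
  rw [← Real.norm_eq_abs, ← coe_nnnorm]
  exact_mod_cast hx

theorem natCast_eq_iterate_one {α : Type*} {T : ℤ → α → α} (hT0 : T 0 = id)
    (hTadd : ∀ a b : ℤ, T (a + b) = T a ∘ T b) (i : ℕ) : T i = (T 1)^[i] := by
  induction i with
  | zero => exact hT0
  | succ i ih => rw [Nat.cast_succ, hTadd, ih, Function.iterate_succ]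

theorem stmt6_general {X : Type*} [MeasurableSpace X] (μ : Measure X) [IsProbabilityMeasure μ]
    (T : ℤ → X → X) (hT0 : T 0 = id) (hTadd : ∀ a b : ℤ, T (a + b) = T a ∘ T b)
    (hTm : ∀ a : ℤ, MeasurePreserving (T a) μ μ)
    (F : X → ℝ) (hF : MemLp F ⊤ μ)
    (a : ℕ → ℕ) (ha : Tendsto a atTop atTop)
    (P : Polynomial ℤ)
    (hPET : ∀ h : X → ℝ, Measurable h → (∃ B : ℝ, ∀ x, |h x| ≤ B) →
      ∃ L : X → ℝ, Integrable L μ ∧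
        (∀ᵐ x ∂μ, Tendsto (fun N : ℕ =>
            (1 / (N : ℝ)) * ∑ n ∈ Finset.range N, h (T (P.eval (n : ℤ)) x))
          atTop (nhds (L x))) ∧
        ∫ x, L x ∂μ = ∫ x, h x ∂μ) :
    ∀ᵐ x ∂μ, Tendsto (fun N : ℕ =>
      (1 / (N : ℝ)) * ∑ n ∈ Finset.range N,
        |(1 / (a n : ℝ)) * (∑ i ∈ Finset.range (a n), F (T (i : ℤ) (T (P.eval (n : ℤ)) x)))
          - (μ[F | MeasurableSpace.generateFrom
              {A : Set X | MeasurableSet A ∧ (T 1 ⁻¹' A : Set X) =ᵐ[μ] (A : Set X)}])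
              (T (P.eval (n : ℤ)) x)|)
      atTop (nhds 0) := by
  have hiter : ∀ i : ℕ, T i = (T 1)^[i] := natCast_eq_iterate_one hT0 hTadd
  have hy : ∀ n : ℕ, Measure.QuasiMeasurePreserving (T (P.eval (n : ℤ))) μ μ :=
    fun n => (hTm _).quasiMeasurePreserving
  obtain ⟨B, hB⟩ := exists_ae_abs_le_of_memLp_top hF
  obtain ⟨F₁, hF₁m, hFF₁⟩ := hF.1.aemeasurable
  have hgood : PointwiseErgodicAlong μ fun n => T (P.eval (n : ℤ)) := fun A hA => by
    obtain ⟨L, hL, hlim, hint⟩ := hPET (A.indicator 1) (measurable_const.indicator hA)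
      ⟨1, fun x => by by_cases hx : x ∈ A <;> simp [hx]⟩
    exact ⟨L, hL, by simpa only [one_div] using hlim, hint.trans (integral_indicator_one hA)⟩
  filter_upwards [ae_tendsto_cesaro_abs_birkhoffAverage_sub_condExp (hTm 1) hF₁m
      (hB.mp (hFF₁.mono fun x hx h => hx ▸ h)) hy hgood ha,
    ae_all_iff.2 fun n => ae_all_iff.2 fun i =>
      (((hTm 1).iterate i).quasiMeasurePreserving.comp (hy n)).ae hFF₁,
    ae_all_iff.2 fun n => (hy n).ae (condExp_congr_ae (m := invSigma μ (T 1)) hFF₁)]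
    with x hx hxF hxc
  refine hx.congr fun N => ?_
  simp only [Function.comp_apply] at hxF
  simp only [hiter, hxF, hxc, birkhoffAverage, birkhoffSum, smul_eq_mul, one_div]

/-- given an invertible m.p.t. (modelled as a measure-preserving
ℤ-action `T`), `F ∈ L^∞(μ)`, `a_n → ∞`, and the pointwise ergodic theorem along
the polynomial `P`, the averages of
`| E_{i < a_n} F(Tⁱ (T^{P(n)} x)) − 𝔼_μ(F | ℐ(T))(T^{P(n)} x) |` tend to `0` a.e. -/
theorem stmt6 {X : Type*} [MeasurableSpace X] (μ : Measure X) [IsProbabilityMeasure μ]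
    (T : ℤ → X → X) (hT0 : T 0 = id) (hTadd : ∀ a b : ℤ, T (a + b) = T a ∘ T b)
    (hTmeas : ∀ a : ℤ, Measurable (T a)) (hTm : ∀ a : ℤ, MeasurePreserving (T a) μ μ)
    (F : X → ℝ) (hF : MemLp F ⊤ μ)
    (a : ℕ → ℕ) (ha : Tendsto a atTop atTop)
    (P : Polynomial ℤ)
    (hPET : ∀ h : X → ℝ, Measurable h → (∃ B : ℝ, ∀ x, |h x| ≤ B) →
      ∃ L : X → ℝ, Integrable L μ ∧
        (∀ᵐ x ∂μ, Tendsto (fun N : ℕ =>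
            (1 / (N : ℝ)) * ∑ n ∈ Finset.range N, h (T (P.eval (n : ℤ)) x))
          atTop (nhds (L x))) ∧
        ∫ x, L x ∂μ = ∫ x, h x ∂μ) :
    ∀ᵐ x ∂μ, Tendsto (fun N : ℕ =>
      (1 / (N : ℝ)) * ∑ n ∈ Finset.range N,
        |(1 / (a n : ℝ)) * (∑ i ∈ Finset.range (a n), F (T (i : ℤ) (T (P.eval (n : ℤ)) x)))
          - (μ[F | MeasurableSpace.generateFrom
              {A : Set X | MeasurableSet A ∧ (T 1 ⁻¹' A : Set X) =ᵐ[μ] (A : Set X)}])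
              (T (P.eval (n : ℤ)) x)|)
      atTop (nhds 0) :=
  stmt6_general μ T hT0 hTadd hTm F hF a ha P hPET
end

section
/- Let (X, 𝒳, μ, (S^t)_{t∈ℝ}) be a measurable flow, and for each k let δ_k > 0 with δ_k → 0 and δ_k / δ_{k+1} ∈ ℕ. Let ℐ(S^{δ_k}) be the invariant σ-algebra of the single transformation S^{δ_k}, and define ℐ(S_∞) = ⋂_k ℐ(S^{δ_k}). Assume moreover there is a dense subset 𝒜 of L²(μ) such that for every g ∈ 𝒜, t ↦ g(S^t x) is equicontinuous at t = 0 uniformly on a full-measure invariant set. Then ℐ(S_∞) = ℐ((S^t)_{t∈ℝ}) modulo μ, where ℐ((S^t)_{t∈ℝ}) is the σ-algebra generated by the sets invariant under all S^t. -/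
open MeasureTheory Filter

/-- A measurable flow: a jointly measurable one-parameter group of
measure-preserving transformations. -/
structure IsMeasurableFlow {X : Type*} [MeasurableSpace X] (μ : Measure X)
    (T : ℝ → X → X) : Prop where
  measurable : Measurable fun p : ℝ × X => T p.1 p.2
  map_zero : T 0 = id
  map_add : ∀ s t : ℝ, T (s + t) = T s ∘ T t
  measurePreserving : ∀ t : ℝ, MeasurePreserving (T t) μ μ

/-- The σ-algebra generated by the sets invariant (mod `μ`) under a single
transformation. -/
def invSigmaOne {X : Type*} [MeasurableSpace X] (μ : Measure X) (T : X → X) :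
    MeasurableSpace X :=
  MeasurableSpace.generateFrom
    {A : Set X | MeasurableSet A ∧ (T ⁻¹' A : Set X) =ᵐ[μ] (A : Set X)}

/-- The σ-algebra generated by the sets invariant (mod `μ`) under every time of
a flow. -/
def invSigmaFlow {X : Type*} [MeasurableSpace X] (μ : Measure X) (S : ℝ → X → X) :
    MeasurableSpace X :=
  MeasurableSpace.generateFrom
    {A : Set X | MeasurableSet A ∧ ∀ t : ℝ, (S t ⁻¹' A : Set X) =ᵐ[μ] (A : Set X)}

open scoped Topology ENNReal symmDiff

/-!
A set `A` invariant mod `μ` under every `S^{δ_k}` is invariant under the group they generate,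
so for each `t` and `k`, `S^{-t} A` agrees mod `μ` with `S^{-c_k} A`, where `c_k ∈ [0, δ_k)` is
`t` reduced modulo `δ_k`. Approximating `1_A` in `L²` by functions from the dense class, on which
the flow is uniformly equicontinuous, shows that `μ (S^{-c} A ∆ A) → 0` as `c → 0`; letting
`k → ∞` gives `μ (S^{-t} A ∆ A) = 0`. The reverse inclusion of σ-algebras is immediate.
-/

section InvariantSigmaAlgebras

variable {X : Type*} [MeasurableSpace X] (μ : Measure X)

theorem measurableSet_invSigmaOne_iff (T : X → X) {A : Set X} :
    MeasurableSet[invSigmaOne μ T] A ↔ MeasurableSet A ∧ T ⁻¹' A =ᵐ[μ] A := by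
  refine ⟨fun h => ?_, fun h => MeasurableSpace.measurableSet_generateFrom h⟩
  let invariantSets : MeasurableSpace X :=
    { MeasurableSet' := fun A => MeasurableSet A ∧ T ⁻¹' A =ᵐ[μ] A
      measurableSet_empty := ⟨.empty, by simp⟩
      measurableSet_compl := fun s hs =>
        ⟨hs.1.compl, by rw [Set.preimage_compl]; exact ae_eq_set_compl_compl.mpr hs.2⟩
      measurableSet_iUnion := fun s hs =>
        ⟨.iUnion fun i => (hs i).1, by
          rw [Set.preimage_iUnion]
          exact Filter.EventuallyEq.countable_iUnion fun i => (hs i).2⟩ }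
  exact MeasurableSpace.generateFrom_le (m := invariantSets) (fun s hs => hs) _ h

theorem invSigmaFlow_le_invSigmaOne (S : ℝ → X → X) (t : ℝ) :
    invSigmaFlow μ S ≤ invSigmaOne μ (S t) :=
  MeasurableSpace.generateFrom_le fun _ hs =>
    MeasurableSpace.measurableSet_generateFrom ⟨hs.1, hs.2 t⟩

end InvariantSigmaAlgebras

section Continuity

variable {X E : Type*} [MeasurableSpace X] {μ : Measure X} [NormedAddCommGroup E] {p : ℝ≥0∞}

theorem eLpNorm_comp_sub_le (hp : 1 ≤ p) {T : X → X} (hT : MeasurePreserving T μ μ)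
    {f g : X → E} (hf : AEStronglyMeasurable f μ) (hg : AEStronglyMeasurable g μ) :
    eLpNorm (f ∘ T - f) p μ ≤
      eLpNorm (f - g) p μ + eLpNorm (g ∘ T - g) p μ + eLpNorm (f - g) p μ := by
  have hfg := hf.sub hg
  have hcomp : ∀ {u : X → E}, AEStronglyMeasurable u μ → AEStronglyMeasurable (u ∘ T) μ :=
    fun hu => hu.comp_quasiMeasurePreserving hT.quasiMeasurePreserving
  have hsplit : f ∘ T - f = (f - g) ∘ T + (g ∘ T - g) - (f - g) := by
    ext x; simp only [Function.comp_apply, Pi.add_apply, Pi.sub_apply]; abel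
  calc eLpNorm (f ∘ T - f) p μ
      ≤ eLpNorm ((f - g) ∘ T + (g ∘ T - g)) p μ + eLpNorm (f - g) p μ := by
        rw [hsplit]; exact eLpNorm_sub_le ((hcomp hfg).add ((hcomp hg).sub hg)) hfg hp
    _ ≤ eLpNorm ((f - g) ∘ T) p μ + eLpNorm (g ∘ T - g) p μ + eLpNorm (f - g) p μ := by
        gcongr; exact eLpNorm_add_le (hcomp hfg) ((hcomp hg).sub hg) hp
    _ = _ := by rw [eLpNorm_comp_measurePreserving hfg hT]

variable {S : ℝ → X → X}

theorem tendsto_eLpNorm_comp_sub_of_approx (hp : 1 ≤ p) (hS : ∀ t, MeasurePreserving (S t) μ μ)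
    {f : X → E} (hf : AEStronglyMeasurable f μ)
    (happrox : ∀ ε > 0, ∃ g : X → E, AEStronglyMeasurable g μ ∧ eLpNorm (f - g) p μ ≤ ε ∧
      Tendsto (fun c => eLpNorm (g ∘ S c - g) p μ) (𝓝 0) (𝓝 0)) :
    Tendsto (fun c => eLpNorm (f ∘ S c - f) p μ) (𝓝 0) (𝓝 0) := by
  refine ENNReal.tendsto_nhds_zero.2 fun ε hε => ?_
  have hε3 : 0 < ε / 3 := ENNReal.div_pos hε.ne' ENNReal.ofNat_ne_top
  obtain ⟨g, hg, hfg, hgcont⟩ := happrox (ε / 3) hε3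
  filter_upwards [ENNReal.tendsto_nhds_zero.1 hgcont (ε / 3) hε3] with c hc
  calc eLpNorm (f ∘ S c - f) p μ
      ≤ eLpNorm (f - g) p μ + eLpNorm (g ∘ S c - g) p μ + eLpNorm (f - g) p μ :=
        eLpNorm_comp_sub_le hp (hS c) hf hg
    _ ≤ ε / 3 + ε / 3 + ε / 3 := by gcongr
    _ = ε := ENNReal.add_thirds ε

theorem tendsto_eLpNorm_comp_sub_of_dense (hp : 1 ≤ p) (hS : ∀ t, MeasurePreserving (S t) μ μ)
    {𝒜 : Set (X → E)} (h𝒜 : ∀ g ∈ 𝒜, AEStronglyMeasurable g μ)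
    (hdense : ∀ f : X → E, MemLp f p μ → ∀ ε > 0,
      ∃ g ∈ 𝒜, eLpNorm (f - g) p μ ≤ ENNReal.ofReal ε)
    (hcont : ∀ g ∈ 𝒜, Tendsto (fun c => eLpNorm (g ∘ S c - g) p μ) (𝓝 0) (𝓝 0))
    {f : X → E} (hf : MemLp f p μ) :
    Tendsto (fun c => eLpNorm (f ∘ S c - f) p μ) (𝓝 0) (𝓝 0) := by
  refine tendsto_eLpNorm_comp_sub_of_approx hp hS hf.1 fun ε hε => ?_
  obtain ⟨r, -, hr, hrε⟩ := ENNReal.lt_iff_exists_real_btwn.1 hε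
  obtain ⟨g, hg, hfg⟩ := hdense f hf r (ENNReal.ofReal_pos.1 hr)
  exact ⟨g, h𝒜 g hg, hfg.trans hrε.le, hcont g hg⟩

theorem tendsto_eLpNorm_comp_sub_of_uniform [IsProbabilityMeasure μ] {g : X → E}
    (hg : ∀ ε > 0, ∀ᶠ t in 𝓝 0, ∀ᵐ x ∂μ, ‖g (S t x) - g x‖ ≤ ε) :
    Tendsto (fun c => eLpNorm (g ∘ S c - g) p μ) (𝓝 0) (𝓝 0) := by
  refine ENNReal.tendsto_nhds_zero.2 fun ε hε => ?_
  obtain ⟨r, -, hr, hrε⟩ := ENNReal.lt_iff_exists_real_btwn.1 hε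
  filter_upwards [hg r (ENNReal.ofReal_pos.1 hr)] with c hc
  calc eLpNorm (g ∘ S c - g) p μ ≤ μ Set.univ ^ p.toReal⁻¹ * ENNReal.ofReal r :=
        eLpNorm_le_of_ae_bound hc
    _ ≤ ε := by simpa using hrε.le

end Continuity

theorem measure_symmDiff_eq_eLpNorm_indicator_sub_sq {X : Type*} [MeasurableSpace X]
    {μ : Measure X} {s t : Set X} (hs : MeasurableSet s) (ht : MeasurableSet t) :
    μ (s ∆ t) = eLpNorm (s.indicator (1 : X → ℝ) - t.indicator 1) 2 μ ^ 2 := by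
  rw [eLpNorm_indicator_sub_indicator, Pi.one_def,
    eLpNorm_indicator_const (hs.symmDiff ht) two_ne_zero ENNReal.ofNat_ne_top, enorm_one, one_mul,
    ← ENNReal.rpow_natCast, ← ENNReal.rpow_mul]
  norm_num

namespace IsMeasurableFlow

variable {X : Type*} [MeasurableSpace X] {μ : Measure X} {S : ℝ → X → X}

def invariantTimes (hS : IsMeasurableFlow μ S) (A : Set X) : AddSubgroup ℝ where
  carrier := {t | S t ⁻¹' A =ᵐ[μ] A}
  zero_mem' := by rw [Set.mem_ofPred_eq, hS.map_zero, Set.preimage_id]; exact ae_eq_refl A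
  add_mem' {a b} ha hb := by
    simp only [Set.mem_ofPred_eq, hS.map_add, Set.preimage_comp] at *
    exact ((hS.measurePreserving b).quasiMeasurePreserving.preimage_ae_eq ha).trans hb
  neg_mem' {a} ha := by
    have h := (hS.measurePreserving (-a)).quasiMeasurePreserving.preimage_ae_eq ha
    rw [← Set.preimage_comp, ← hS.map_add, add_neg_cancel, hS.map_zero, Set.preimage_id] at h
    exact h.symm

theorem tendsto_measure_preimage_symmDiff (hS : IsMeasurableFlow μ S) {A : Set X}
    (hA : MeasurableSet A)
    (hcont : Tendsto (fun c => eLpNorm (A.indicator (1 : X → ℝ) ∘ S c - A.indicator 1) 2 μ)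
      (𝓝 0) (𝓝 0)) :
    Tendsto (fun c => μ ((S c ⁻¹' A) ∆ A)) (𝓝 0) (𝓝 0) := by
  have hsq := (ENNReal.continuous_pow 2).tendsto 0 |>.comp hcont
  rw [zero_pow two_ne_zero] at hsq
  refine hsq.congr fun c => ?_
  have hcomp : A.indicator (1 : X → ℝ) ∘ S c = (S c ⁻¹' A).indicator 1 :=
    funext fun _ => (Set.indicator_comp_right (S c)).symm
  rw [Function.comp_apply, hcomp, measure_symmDiff_eq_eLpNorm_indicator_sub_sq
    ((hS.measurePreserving c).measurable hA) hA]

theorem preimage_ae_eq_of_tendsto_measure_symmDiff (hS : IsMeasurableFlow μ S) {δ : ℕ → ℝ}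
    (hδpos : ∀ k, 0 < δ k) (hδ0 : Tendsto δ atTop (𝓝 0)) {A : Set X}
    (hAinv : ∀ k, S (δ k) ⁻¹' A =ᵐ[μ] A)
    (hcont : Tendsto (fun c => μ ((S c ⁻¹' A) ∆ A)) (𝓝 0) (𝓝 0)) (t : ℝ) :
    S t ⁻¹' A =ᵐ[μ] A := by
  -- `c k` is `t` reduced modulo `δ k`
  set c : ℕ → ℝ := fun k => Int.fract (t / δ k) * δ k
  have hc : Tendsto c atTop (𝓝 0) :=
    tendsto_of_tendsto_of_tendsto_of_le_of_le tendsto_const_nhds hδ0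
      (fun k => mul_nonneg (Int.fract_nonneg _) (hδpos k).le)
      (fun k => mul_le_of_le_one_left (hδpos k).le (Int.fract_lt_one _).le)
  have hshift : ∀ k, S t ⁻¹' A =ᵐ[μ] S (c k) ⁻¹' A := fun k => by
    have hmem : (⌊t / δ k⌋ : ℝ) * δ k ∈ hS.invariantTimes A := by
      simpa only [zsmul_eq_mul] using (hS.invariantTimes A).zsmul_mem (hAinv k) ⌊t / δ k⌋
    have ht : ⌊t / δ k⌋ * δ k + c k = t := by
      simp only [c, Int.fract]; field_simp [(hδpos k).ne']; ring
    rw [← ht, hS.map_add, Set.preimage_comp]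
    exact (hS.measurePreserving (c k)).quasiMeasurePreserving.preimage_ae_eq hmem
  have hconst : ∀ k, μ ((S t ⁻¹' A) ∆ A) = μ ((S (c k) ⁻¹' A) ∆ A) := fun k =>
    measure_congr ((hshift k).symmDiff (ae_eq_refl A))
  rw [← measure_symmDiff_eq_zero_iff]
  exact tendsto_nhds_unique (tendsto_const_nhds.congr hconst) (hcont.comp hc)

end IsMeasurableFlow

theorem stmt10_general {X : Type*} [MeasurableSpace X] (μ : Measure X) [IsProbabilityMeasure μ]
    (S : ℝ → X → X) (hS : IsMeasurableFlow μ S)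
    (δ : ℕ → ℝ) (hδpos : ∀ k, 0 < δ k) (hδ0 : Tendsto δ atTop (nhds 0))
    (𝒜 : Set (X → ℝ)) (h𝒜L2 : ∀ g ∈ 𝒜, MemLp g 2 μ)
    (hdense : ∀ f : X → ℝ, MemLp f 2 μ → ∀ ε > 0,
      ∃ g ∈ 𝒜, eLpNorm (f - g) 2 μ ≤ ENNReal.ofReal ε)
    (X₀ : Set X) (hX₀ : μ X₀ᶜ = 0)
    (hequi : ∀ g ∈ 𝒜, ∀ ε > 0, ∃ η > 0, ∀ x ∈ X₀, ∀ t : ℝ, |t| < η →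
      |g (S t x) - g x| < ε) :
    (∀ A : Set X, MeasurableSet[⨅ k : ℕ, invSigmaOne μ (S (δ k))] A →
      ∃ B : Set X, MeasurableSet[invSigmaFlow μ S] B ∧ (A : Set X) =ᵐ[μ] B) ∧
    (∀ B : Set X, MeasurableSet[invSigmaFlow μ S] B →
      ∃ A : Set X, MeasurableSet[⨅ k : ℕ, invSigmaOne μ (S (δ k))] A ∧
        (B : Set X) =ᵐ[μ] A) := by
  refine ⟨fun A hA => ?_, fun B hB =>
    ⟨B, le_iInf (fun k => invSigmaFlow_le_invSigmaOne μ S (δ k)) B hB, ae_eq_refl B⟩⟩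
  rw [MeasurableSpace.measurableSet_iInf] at hA
  have hAinv k := (measurableSet_invSigmaOne_iff μ (S (δ k))).1 (hA k)
  have hAm : MeasurableSet A := (hAinv 0).1
  have hcont𝒜 : ∀ g ∈ 𝒜, Tendsto (fun c => eLpNorm (g ∘ S c - g) 2 μ) (𝓝 0) (𝓝 0) :=
    fun g hg => tendsto_eLpNorm_comp_sub_of_uniform fun ε hε => by
      obtain ⟨η, hη, hgη⟩ := hequi g hg ε hε
      filter_upwards [Metric.ball_mem_nhds 0 hη] with t ht
      filter_upwards [mem_ae_iff.2 hX₀] with x hx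
      exact (hgη x hx t (by simpa using ht)).le
  have hcontA := tendsto_eLpNorm_comp_sub_of_dense one_le_two hS.measurePreserving
    (fun g hg => (h𝒜L2 g hg).1) hdense hcont𝒜
    (memLp_indicator_const 2 hAm (1 : ℝ) (Or.inr (measure_ne_top μ A)))
  have hAflow := hS.preimage_ae_eq_of_tendsto_measure_symmDiff hδpos hδ0 (fun k => (hAinv k).2)
    (hS.tendsto_measure_preimage_symmDiff hAm hcontA)
  exact ⟨A, MeasurableSpace.measurableSet_generateFrom ⟨hAm, hAflow⟩, ae_eq_refl A⟩

/-- `ℐ(S_∞) = ⋂_k ℐ(S^{δ_k})` coincides mod `μ` with the invariant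
σ-algebra of the whole flow, under the equicontinuity hypothesis available for
topological models. -/
theorem stmt10 {X : Type*} [MeasurableSpace X] (μ : Measure X) [IsProbabilityMeasure μ]
    (S : ℝ → X → X) (hS : IsMeasurableFlow μ S)
    (δ : ℕ → ℝ) (hδpos : ∀ k, 0 < δ k) (hδ0 : Tendsto δ atTop (nhds 0))
    (hdiv : ∀ k, ∃ m : ℕ, δ k = (m : ℝ) * δ (k + 1))
    (𝒜 : Set (X → ℝ)) (h𝒜L2 : ∀ g ∈ 𝒜, MemLp g 2 μ)
    (hdense : ∀ f : X → ℝ, MemLp f 2 μ → ∀ ε > 0,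
      ∃ g ∈ 𝒜, eLpNorm (f - g) 2 μ ≤ ENNReal.ofReal ε)
    (X₀ : Set X) (hX₀ : μ X₀ᶜ = 0) (hX₀inv : ∀ t : ℝ, S t ⁻¹' X₀ = X₀)
    (hequi : ∀ g ∈ 𝒜, ∀ ε > 0, ∃ η > 0, ∀ x ∈ X₀, ∀ t : ℝ, |t| < η →
      |g (S t x) - g x| < ε) :
    (∀ A : Set X, MeasurableSet[⨅ k : ℕ, invSigmaOne μ (S (δ k))] A →
      ∃ B : Set X, MeasurableSet[invSigmaFlow μ S] B ∧ (A : Set X) =ᵐ[μ] B) ∧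
    (∀ B : Set X, MeasurableSet[invSigmaFlow μ S] B →
      ∃ A : Set X, MeasurableSet[⨅ k : ℕ, invSigmaOne μ (S (δ k))] A ∧
        (B : Set X) =ᵐ[μ] A) :=
  stmt10_general μ S hS δ hδpos hδ0 𝒜 h𝒜L2 hdense X₀ hX₀ hequi
end
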